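/- Let X be a separable metric space and let E be an upper semi-continuous decomposition of X, i.e., a partition of X into compact sets that forms an upper semi-continuous collection. Then the quotient space X/E, obtained by collapsing each element of E to a point and equipped with the quotient topology, is a separable metrizable space. -/

import Mathlib

/- ## Common setup: the circle `ℝ/ℤ`, the maps `σ_d`, chords, geodesic laminations -/

noncomputable section

open Set Metric MeasureTheory Filter Topology

/-- The abstract circle `ℝ/ℤ`. -/
abbrev S := AddCircle (1 : ℝ)

instance : Fact ((0 : ℝ) < 1) := ⟨one_pos⟩

/-- The identification of `ℝ/ℤ` with the unit circle in `ℂ`, `θ ↦ e^{2πiθ}`. -/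
noncomputable def toC (x : S) : ℂ := (AddCircle.toCircle x : ℂ)

/-- The angle-multiplication map `σ_d : θ ↦ dθ` (i.e. `z ↦ z^d`). -/
def sig (d : ℕ) (x : S) : S := d • x

/-- The open unit disk `𝔻 ⊆ ℂ`. -/
def openDisk : Set ℂ := Metric.ball 0 1

/-- The closed unit disk `𝔻̄ ⊆ ℂ`. -/
def closedDisk : Set ℂ := Metric.closedBall 0 1

/-- The set of circle points (angles) whose image in `ℂ` lies in `C`. -/
def circPart (C : Set ℂ) : Set S := {a : S | toC a ∈ C}

lemma sym2_setOf_finite (p : Sym2 S) : {a : S | a ∈ p}.Finite := by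
  induction p using Sym2.ind with
  | _ x y =>
    have h : {a : S | a ∈ Sym2.mk x y} ⊆ {x, y} := by
      intro a ha
      rcases Sym2.mem_iff.mp ha with h | h <;> simp [h]
    exact Set.Finite.subset ((Set.finite_singleton y).insert x) h

lemma sym2_setOf_nonempty (p : Sym2 S) : {a : S | a ∈ p}.Nonempty := by
  induction p using Sym2.ind with
  | _ x y => exact ⟨x, Sym2.mem_iff.mpr (Or.inl rfl)⟩

/-- The chord `overline{ab}` of the closed unit disk corresponding to an unordered
pair of circle points: the closed straight segment joining them (degenerate if they agree). -/
def chordOf (p : Sym2 S) : Set ℂ := convexHull ℝ (toC '' {a : S | a ∈ p})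

/-- The endpoints (in `ℂ`) of a chord. -/
def chordEnds (p : Sym2 S) : Set ℂ := toC '' {a : S | a ∈ p}

/-- A critical chord for `σ_d`: a nondegenerate chord whose endpoints have the same `σ_d`-image. -/
def IsCritChord (d : ℕ) (p : Sym2 S) : Prop := ¬ p.IsDiag ∧ (p.map (sig d)).IsDiag

/-- A geodesic lamination: a collection of chords (leaves), pairwise disjoint in the open
unit disk, containing all degenerate chords, whose union is closed. -/
structure GeoLam where
  leaves : Set (Sym2 S)
  diag_mem : ∀ a : S, Sym2.diag a ∈ leaves
  pairwise_unlinked : ∀ p ∈ leaves, ∀ q ∈ leaves, p ≠ q →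
    chordOf p ∩ chordOf q ∩ openDisk = ∅
  closed_plus : IsClosed (⋃ p ∈ leaves, chordOf p)

namespace GeoLam

/-- The union `L⁺` of all leaves of a lamination. -/
def plus (L : GeoLam) : Set ℂ := ⋃ p ∈ L.leaves, chordOf p

/-- Sibling `σ_d`-invariance of a geodesic lamination. -/
def Invariant (d : ℕ) (L : GeoLam) : Prop :=
  (∀ p ∈ L.leaves, p.map (sig d) ∈ L.leaves) ∧
  (∀ p ∈ L.leaves, ∃ q ∈ L.leaves, q.map (sig d) = p) ∧
  (∀ p ∈ L.leaves, ¬ (p.map (sig d)).IsDiag →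
    ∃ f : Fin d → Sym2 S, (∃ i, f i = p) ∧ (∀ i, f i ∈ L.leaves) ∧
      (∀ i, (f i).map (sig d) = p.map (sig d)) ∧
      (∀ i j, i ≠ j → chordOf (f i) ∩ chordOf (f j) = ∅))

/-- A gap of a lamination: the closure of a connected component of `𝔻 ∖ L⁺`. -/
def IsGap (L : GeoLam) (G : Set ℂ) : Prop :=
  ∃ z ∈ openDisk \ L.plus, G = closure (connectedComponentIn (openDisk \ L.plus) z)

end GeoLam

/-- A (nondegenerate) chord that is an edge of the closed set `G`, i.e. lies in its boundary. -/
def IsEdgeChord (G : Set ℂ) (p : Sym2 S) : Prop := ¬ p.IsDiag ∧ chordOf p ⊆ frontier G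

/-- `C` is an edge of `G` (as a set: the chord of some edge of `G`). -/
def IsEdgeSet (G C : Set ℂ) : Prop := ∃ p : Sym2 S, IsEdgeChord G p ∧ C = chordOf p

namespace GeoLam

/-- A critical leaf of `L`, regarded as a subset of the disk. -/
def IsCritLeaf (d : ℕ) (L : GeoLam) (X : Set ℂ) : Prop :=
  ∃ p ∈ L.leaves, IsCritChord d p ∧ X = chordOf p

/-- A critical gap: all edges critical, or some critical chord is contained in the
interior of the gap except for its endpoints. -/
def IsCritGap (d : ℕ) (L : GeoLam) (G : Set ℂ) : Prop :=
  L.IsGap G ∧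
  ((∀ p : Sym2 S, IsEdgeChord G p → (p.map (sig d)).IsDiag) ∨
    ∃ p : Sym2 S, IsCritChord d p ∧ chordOf p \ chordEnds p ⊆ interior G)

/-- A critical set of `L`: a critical leaf or a critical gap. -/
def IsCritSet (d : ℕ) (L : GeoLam) (X : Set ℂ) : Prop :=
  L.IsCritLeaf d X ∨ L.IsCritGap d X

/-- A critical object of `L`: a critical set maximal by inclusion. -/
def IsCritObject (d : ℕ) (L : GeoLam) (X : Set ℂ) : Prop :=
  L.IsCritSet d X ∧ ∀ Y, L.IsCritSet d Y → X ⊆ Y → Y = X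

/-- An all-critical set: a critical leaf or an all-critical gap. -/
def IsAllCritSet (d : ℕ) (L : GeoLam) (X : Set ℂ) : Prop :=
  L.IsCritLeaf d X ∨
    (L.IsGap X ∧ ∀ p : Sym2 S, IsEdgeChord X p → (p.map (sig d)).IsDiag)

/-- An all-critical triangle of the (cubic) lamination `L`. -/
def IsAllCritTriangle (L : GeoLam) (Δ : Set ℂ) : Prop :=
  ∃ a b c : S, a ≠ b ∧ b ≠ c ∧ a ≠ c ∧ sig 3 a = sig 3 b ∧ sig 3 b = sig 3 c ∧
    Δ = convexHull ℝ ({toC a, toC b, toC c} : Set ℂ) ∧ L.IsGap Δ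

end GeoLam

/- ## Laminational equivalence relations -/

/-- A (nondegenerate) laminational equivalence relation on the circle:
closed graph, disjoint convex hulls of distinct classes, finite classes. -/
structure LamEq where
  r : S → S → Prop
  equiv : Equivalence r
  closedGraph : IsClosed {q : S × S | r q.1 q.2}
  disjointHulls : ∀ x y : S, ¬ r x y →
    Disjoint (convexHull ℝ (toC '' {z | r x z})) (convexHull ℝ (toC '' {z | r y z}))
  finiteClasses : ∀ x : S, {y | r x y}.Finite

namespace LamEq

/-- The `∼`-class of a point. -/
def cls (E : LamEq) (x : S) : Set S := {y | E.r x y}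

/-- The convex hull (in `ℂ`) of a class. -/
def classHull (E : LamEq) (x : S) : Set ℂ := convexHull ℝ (toC '' E.cls x)

/-- `σ_d`-invariance of a laminational equivalence relation: classes map onto classes,
and on each class `σ_d` extends to an orientation preserving covering map of the circle
for which the class is the full preimage of its image. -/
def Invariant (d : ℕ) (E : LamEq) : Prop :=
  (∀ x : S, sig d '' E.cls x = E.cls (sig d x)) ∧
  (∀ x : S, ∃ F : S → S, Continuous F ∧ IsCoveringMap F ∧
    (∃ f : ℝ → ℝ, Monotone f ∧ Continuous f ∧ ∀ t : ℝ, ((f t : ℝ) : S) = F ((t : ℝ) : S)) ∧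
    (∀ y ∈ E.cls x, F y = sig d y) ∧
    F ⁻¹' (sig d '' E.cls x) = E.cls x)

end LamEq

/-- `L` is the canonical geodesic lamination `L_∼` generated by `E`: its leaves are all
degenerate chords together with the edges of the convex hulls of all classes. -/
def IsCanonical (E : LamEq) (L : GeoLam) : Prop :=
  L.leaves = {p : Sym2 S | p.IsDiag ∨ ∃ x : S, chordOf p ⊆ frontier (E.classHull x)}

/-- A cubic geodesic lamination is dendritic if it is the canonical lamination of a
`σ₃`-invariant laminational equivalence relation all of whose gaps are finite. -/
def GeoLam.Dendritic (L : GeoLam) : Prop :=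
  ∃ E : LamEq, E.Invariant 3 ∧ IsCanonical E L ∧ ∀ G, L.IsGap G → (circPart G).Finite

/- ## Laminations as points of `𝔠(𝔠(𝔻̄))` -/

/-- A chord as a nonempty compact subset of `ℂ`. -/
noncomputable def chordNC (p : Sym2 S) : TopologicalSpace.NonemptyCompacts ℂ :=
  ⟨⟨chordOf p, ((sym2_setOf_finite p).image toC).isCompact_convexHull ℝ⟩,
    ((sym2_setOf_nonempty p).image toC).convexHull⟩

/-- A geodesic lamination as a collection of compact subsets of the disk, i.e.
as a subset of `𝔠(𝔻̄)`. -/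
def GeoLam.NC (L : GeoLam) : Set (TopologicalSpace.NonemptyCompacts ℂ) := chordNC '' L.leaves

/-- A geodesic lamination is perfect if, as a subset of the hyperspace `𝔠(𝔻̄)` with the
Hausdorff metric, it has no isolated points. -/
def GeoLam.Perfect (L : GeoLam) : Prop :=
  ∀ q ∈ L.NC, q ∈ closure (L.NC \ {q})

/-- Convergence of laminations in `𝔠(𝔠(𝔻̄))` (Hausdorff distance of leaf collections tends to 0). -/
def TendstoLam (Ls : ℕ → GeoLam) (L : GeoLam) : Prop :=
  Tendsto (fun n => EMetric.hausdorffEdist ((Ls n).NC) L.NC) atTop (nhds 0)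

/-- Convergence of compact subsets of `ℂ` in the Hausdorff metric. -/
def TendstoSet (Cs : ℕ → Set ℂ) (C : Set ℂ) : Prop :=
  Tendsto (fun n => EMetric.hausdorffEdist (Cs n) C) atTop (nhds 0)

/- ## Marked (cubic) laminations -/

/-- The condition that `σ_d` is one-to-one on the boundary of each component of
`𝔻̄ ∖ (C ∪ D)`, except at endpoints of critical edges of such components. -/
def MarkedCond (d : ℕ) (C D : Set ℂ) : Prop :=
  ∀ z ∈ closedDisk \ (C ∪ D),
    Set.InjOn (sig d)
      ({a : S | toC a ∈ frontier (connectedComponentIn (closedDisk \ (C ∪ D)) z)} \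
       {a : S | ∃ p : Sym2 S, IsCritChord d p ∧
          chordOf p ⊆ frontier (connectedComponentIn (closedDisk \ (C ∪ D)) z) ∧ a ∈ p})

/-- A marked cubic lamination `(L, C, D)`: a `σ₃`-invariant geodesic lamination together
with two critical sets such that `σ₃` is one-to-one on the boundary of each component of
`𝔻̄ ∖ (C ∪ D)` except at endpoints of critical edges. -/
def MarkedLam (L : GeoLam) (C D : Set ℂ) : Prop :=
  L.Invariant 3 ∧ L.IsCritSet 3 C ∧ L.IsCritSet 3 D ∧ MarkedCond 3 C D

/-- A limit marked lamination: a marked lamination arising as a limit of marked laminations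
with finite critical sets. -/
def IsLimitMarked (L : GeoLam) (C D : Set ℂ) : Prop :=
  MarkedLam L C D ∧
  ∃ (Ls : ℕ → GeoLam) (Cs Ds : ℕ → Set ℂ),
    (∀ n, MarkedLam (Ls n) (Cs n) (Ds n)) ∧
    (∀ n, (circPart (Cs n)).Finite ∧ (circPart (Ds n)).Finite) ∧
    TendstoLam Ls L ∧ TendstoSet Cs C ∧ TendstoSet Ds D

/- ## Co-critical sets and mixed tags -/

/-- `σ₃(C) = CH(σ₃(C ∩ S))` for a set `C = CH(C ∩ S)`. -/
def sigHull (C : Set ℂ) : Set ℂ := convexHull ℝ (toC '' (sig 3 '' circPart C))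

/-- A hole of `C`: a connected component of the complement in `S` of `C ∩ S`. -/
def IsHole (C : Set ℂ) (H : Set S) : Prop :=
  ∃ a : S, a ∉ circPart C ∧ H = connectedComponentIn {b : S | b ∉ circPart C} a

/-- `K` is the co-critical set `co(C)` of `C` (relative to the lamination `L`):
if `C` is the only critical object of `L` then `co(C) = C`; otherwise `C` has a unique
hole `H` of length `> 1/3` and `co(C)` is the convex hull of the points of `H` whose
`σ₃`-images lie in `σ₃(C)`. -/
def IsCo (L : GeoLam) (C K : Set ℂ) : Prop :=
  (L.IsCritObject 3 C ∧ (∀ Y, L.IsCritObject 3 Y → Y = C) ∧ K = C) ∨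
  ((¬ (L.IsCritObject 3 C ∧ ∀ Y, L.IsCritObject 3 Y → Y = C)) ∧
    ∃ H : Set S, IsHole C H ∧ volume H > 1/3 ∧
      (∀ H', IsHole C H' → volume H' > 1/3 → H' = H) ∧
      K = convexHull ℝ (toC '' {a : S | a ∈ H ∧ sig 3 a ∈ sig 3 '' circPart C}))

/-- The mixed tag `co(C¹) × σ₃(C²) ⊆ 𝔻̄ × 𝔻̄`, given the co-critical set `K = co(C¹)`. -/
def mixedTag (K C2 : Set ℂ) : Set (ℂ × ℂ) := K ×ˢ sigHull C2

/-- A marking of a dendritic lamination: an ordering of its critical objects. -/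
def IsDendriticMarking (L : GeoLam) (C1 C2 : Set ℂ) : Prop :=
  L.IsCritObject 3 C1 ∧ L.IsCritObject 3 C2 ∧
  ∀ Y, L.IsCritObject 3 Y → Y = C1 ∨ Y = C2

/- ## Critical quadrilaterals -/

/-- A quadruple of circle points (a candidate quadrilateral). -/
abbrev Quad := Fin 4 → S

/-- Weak circular order of four points `a₀ ≤ a₁ ≤ a₂ ≤ a₃ ≤ a₀`. -/
def Circ4 (x0 x1 x2 x3 : S) : Prop := btw x0 x1 x2 ∧ btw x0 x2 x3

/-- Weak circular order of eight points. -/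
def Circ8 (x0 x1 x2 x3 x4 x5 x6 x7 : S) : Prop :=
  btw x0 x1 x2 ∧ btw x0 x2 x3 ∧ btw x0 x3 x4 ∧ btw x0 x4 x5 ∧ btw x0 x5 x6 ∧ btw x0 x6 x7

/-- A critical quadrilateral for `σ₃`: a circularly ordered quadruple whose two diagonals
(spikes) are critical chords. -/
def IsCritQuad (q : Quad) : Prop :=
  Circ4 (q 0) (q 1) (q 2) (q 3) ∧ sig 3 (q 0) = sig 3 (q 2) ∧ sig 3 (q 1) = sig 3 (q 3)

/-- Two quadrilaterals are equal as critical quadrilaterals if they differ by a cyclic rotation. -/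
def QuadEquiv (q1 q2 : Quad) : Prop := ∃ k : Fin 4, ∀ i, q2 i = q1 (i + k)

/-- Strong linkage: the vertices can be (cyclically) numbered so that they weakly interleave. -/
def StronglyLinked (a b : Quad) : Prop :=
  ∃ k m : Fin 4,
    Circ8 (a k) (b m) (a (k + 1)) (b (m + 1)) (a (k + 2)) (b (m + 2)) (a (k + 3)) (b (m + 3))

/-- The convex hull of a quadrilateral. -/
def quadHull (q : Quad) : Set ℂ := convexHull ℝ (toC '' Set.range q)

/-- The spikes (diagonals) of a critical quadrilateral. -/
def spikes (q : Quad) : Set (Sym2 S) := {Sym2.mk (q 0) (q 2), Sym2.mk (q 1) (q 3)}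

/-- Two critical quadrilaterals share a spike. -/
def ShareSpike (q1 q2 : Quad) : Prop := (spikes q1 ∩ spikes q2).Nonempty

/-- A collapsing quadrilateral: its `σ₃`-image is a nondegenerate leaf. -/
def Collapsing (q : Quad) : Prop := sig 3 (q 0) ≠ sig 3 (q 1)

/-- `X` is a leaf or a gap of `L`. -/
def IsLeafOrGap (L : GeoLam) (X : Set ℂ) : Prop :=
  (∃ p ∈ L.leaves, X = chordOf p) ∨ L.IsGap X

/-- A quadratically critical portrait of `L`: a pair of distinct critical quadrilaterals
that are leaves or gaps of `L`. -/
def IsQCP (L : GeoLam) (q1 q2 : Quad) : Prop :=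
  IsCritQuad q1 ∧ IsCritQuad q2 ∧ ¬ QuadEquiv q1 q2 ∧
  IsLeafOrGap L (quadHull q1) ∧ IsLeafOrGap L (quadHull q2)

/-- Two laminations share the same all-critical triangle. -/
def ShareAllCritTriangle (L1 L2 : GeoLam) : Prop :=
  ∃ Δ : Set ℂ, L1.IsAllCritTriangle Δ ∧ L2.IsAllCritTriangle Δ

/-- Laminations with quadratically critical portraits are linked or essentially equal. -/
def PortraitsLinkedOrEssEq (L1 : GeoLam) (q11 q12 : Quad) (L2 : GeoLam) (q21 q22 : Quad) : Prop :=
  (StronglyLinked q11 q21 ∧ StronglyLinked q12 q22) ∨ ShareAllCritTriangle L1 L2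

/-- Laminations with quadratically critical portraits are essentially equal. -/
def PortraitsEssEq (L1 : GeoLam) (q11 q12 : Quad) (L2 : GeoLam) (q21 q22 : Quad) : Prop :=
  (StronglyLinked q11 q21 ∧ ShareSpike q11 q21 ∧
    StronglyLinked q12 q22 ∧ ShareSpike q12 q22) ∨ ShareAllCritTriangle L1 L2

/-- A quadrilateral shares a pair of opposite edges with the set `C`. -/
def SharesOppEdges (q : Quad) (C : Set ℂ) : Prop :=
  (chordOf (Sym2.mk (q 0) (q 1)) ⊆ frontier C ∧ chordOf (Sym2.mk (q 2) (q 3)) ⊆ frontier C) ∨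
  (chordOf (Sym2.mk (q 1) (q 2)) ⊆ frontier C ∧ chordOf (Sym2.mk (q 3) (q 0)) ⊆ frontier C)

/-- Marked laminations (and their critical patterns) are linked or essentially equal:
there are tunings `L_i^m ⊇ L_i` with quadratically critical portraits `Q_iʲ ⊆ C_iʲ`
(collapsing ones sharing a pair of opposite edges with `C_iʲ`) that are linked or
essentially equal. -/
def MarkedLinkedOrEssEq (L1 : GeoLam) (C11 C12 : Set ℂ) (L2 : GeoLam) (C21 C22 : Set ℂ) : Prop :=
  ∃ (L1m L2m : GeoLam) (q11 q12 q21 q22 : Quad),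
    L1.leaves ⊆ L1m.leaves ∧ L2.leaves ⊆ L2m.leaves ∧
    L1m.Invariant 3 ∧ L2m.Invariant 3 ∧
    IsQCP L1m q11 q12 ∧ IsQCP L2m q21 q22 ∧
    quadHull q11 ⊆ C11 ∧ quadHull q12 ⊆ C12 ∧ quadHull q21 ⊆ C21 ∧ quadHull q22 ⊆ C22 ∧
    (Collapsing q11 → SharesOppEdges q11 C11) ∧ (Collapsing q12 → SharesOppEdges q12 C12) ∧
    (Collapsing q21 → SharesOppEdges q21 C21) ∧ (Collapsing q22 → SharesOppEdges q22 C22) ∧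
    PortraitsLinkedOrEssEq L1m q11 q12 L2m q21 q22

/-- Marked laminations (and their critical patterns) are essentially equal. -/
def MarkedEssEq (L1 : GeoLam) (C11 C12 : Set ℂ) (L2 : GeoLam) (C21 C22 : Set ℂ) : Prop :=
  ∃ (L1m L2m : GeoLam) (q11 q12 q21 q22 : Quad),
    L1.leaves ⊆ L1m.leaves ∧ L2.leaves ⊆ L2m.leaves ∧
    L1m.Invariant 3 ∧ L2m.Invariant 3 ∧
    IsQCP L1m q11 q12 ∧ IsQCP L2m q21 q22 ∧
    quadHull q11 ⊆ C11 ∧ quadHull q12 ⊆ C12 ∧ quadHull q21 ⊆ C21 ∧ quadHull q22 ⊆ C22 ∧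
    (Collapsing q11 → SharesOppEdges q11 C11) ∧ (Collapsing q12 → SharesOppEdges q12 C12) ∧
    (Collapsing q21 → SharesOppEdges q21 C21) ∧ (Collapsing q22 → SharesOppEdges q22 C22) ∧
    PortraitsEssEq L1m q11 q12 L2m q21 q22

/-!
Upper semi-continuity of `E` says exactly that the quotient map `q : X → X/E` is closed; its
fibres are the members of `E`, hence compact, so `q` is a perfect map. Perfect surjections
carry second countability, normality and the `T₁` property from `X` to `X/E`, and a normal
`T₁` second countable space is metrizable by Urysohn's theorem.
-/

section ProperImage

open TopologicalSpace

variable {X Y : Type*} [TopologicalSpace X] [TopologicalSpace Y] {f : X → Y}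

theorem TopologicalSpace.IsTopologicalBasis.exists_finite_sUnion_between {b : Set (Set X)}
    (hb : IsTopologicalBasis b) {K U : Set X} (hK : IsCompact K) (hU : IsOpen U) (hKU : K ⊆ U) :
    ∃ s ⊆ b, s.Finite ∧ K ⊆ ⋃₀ s ∧ ⋃₀ s ⊆ U := by
  have hcover : K ⊆ ⋃ v ∈ {v ∈ b | v ⊆ U}, v := by
    rw [← sUnion_eq_biUnion, ← hb.open_eq_sUnion' hU]
    exact hKU
  obtain ⟨s, hs, hsf, hKs⟩ := hK.elim_finite_subcover_image (fun v hv => hb.isOpen hv.1) hcover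
  exact ⟨s, fun v hv => (hs hv).1, hsf, sUnion_eq_biUnion ▸ hKs,
    sUnion_subset fun v hv => (hs hv).2⟩

theorem IsClosedMap.normalSpace_of_surjective [NormalSpace X] (hf : IsClosedMap f)
    (hcont : Continuous f) (hsurj : Function.Surjective f) : NormalSpace Y where
  normal S T hS hT hST := by
    obtain ⟨U, V, hU, hV, hSU, hTV, hUV⟩ :=
      normal_separation (hS.preimage hcont) (hT.preimage hcont) (hST.preimage f)
    refine ⟨kernImage f U, kernImage f V, isClosedMap_iff_kernImage.mp hf hU,
      isClosedMap_iff_kernImage.mp hf hV, subset_kernImage_iff.mpr hSU,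
      subset_kernImage_iff.mpr hTV, disjoint_left.mpr fun y hyU hyV => ?_⟩
    obtain ⟨x, rfl⟩ := hsurj y
    exact disjoint_left.mp hUV (hyU rfl) (hyV rfl)

theorem IsProperMap.t1Space_of_surjective [T2Space X] (hf : IsProperMap f)
    (hsurj : Function.Surjective f) : T1Space Y where
  t1 y := by
    rw [← hsurj.image_preimage {y}]
    exact hf.isClosedMap _ (hf.isCompact_preimage isCompact_singleton).isClosed

/-- A basis of `Y` is formed by the sets `{y | f ⁻¹' {y} ⊆ ⋃₀ s}`, `s` a finite family of basic
open sets of `X`. -/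
theorem IsProperMap.secondCountableTopology_of_surjective [SecondCountableTopology X]
    (hf : IsProperMap f) (hsurj : Function.Surjective f) : SecondCountableTopology Y := by
  obtain ⟨b, hbc, -, hb⟩ := exists_countable_basis X
  refine IsTopologicalBasis.secondCountableTopology
    (b := (fun s => kernImage f (⋃₀ s)) '' {s | s.Finite ∧ s ⊆ b}) ?_
    ((countable_ofPred_finite_subset hbc).image _)
  refine isTopologicalBasis_of_isOpen_of_nhds ?_ fun y W hyW hW => ?_
  · rintro _ ⟨s, ⟨-, hsb⟩, rfl⟩
    exact isClosedMap_iff_kernImage.mp hf.isClosedMap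
      (isOpen_sUnion fun v hv => hb.isOpen (hsb hv))
  · obtain ⟨s, hsb, hsf, hys, hsW⟩ := hb.exists_finite_sUnion_between
      (hf.isCompact_preimage isCompact_singleton) (hW.preimage hf.continuous)
      (preimage_mono (singleton_subset_iff.mpr hyW))
    refine ⟨_, ⟨s, ⟨hsf, hsb⟩, rfl⟩, subset_kernImage_iff.mpr hys rfl, ?_⟩
    calc kernImage f (⋃₀ s) ⊆ kernImage f (f ⁻¹' W) := kernImage_mono hsW
      _ = W := kernImage_preimage_eq_iff.mpr (by simp [hsurj.range_eq])

theorem IsProperMap.metrizableSpace_of_surjective [T3Space X] [SecondCountableTopology X]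
    (hf : IsProperMap f) (hsurj : Function.Surjective f) : MetrizableSpace Y := by
  have := hf.t1Space_of_surjective hsurj
  have := hf.isClosedMap.normalSpace_of_surjective hf.continuous hsurj
  have := hf.secondCountableTopology_of_surjective hsurj
  exact metrizableSpace_of_t3_secondCountable Y

end ProperImage

section Decomposition

variable {X : Type*} {E : Set (Set X)}

def PartitionRel (E : Set (Set X)) (x y : X) : Prop := ∃ A ∈ E, x ∈ A ∧ y ∈ A

theorem partitionRel_iff_mem (hdisj : ∀ A ∈ E, ∀ B ∈ E, A ≠ B → Disjoint A B)
    {A : Set X} (hA : A ∈ E) {x : X} (hx : x ∈ A) (y : X) : PartitionRel E y x ↔ y ∈ A := by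
  refine ⟨fun ⟨B, hB, hyB, hxB⟩ => ?_, fun hy => ⟨A, hA, hy, hx⟩⟩
  by_cases hAB : A = B
  · exact hAB ▸ hyB
  · exact absurd hxB (disjoint_left.mp (hdisj A hA B hB hAB) hx)

theorem partitionRel_equivalence (hdisj : ∀ A ∈ E, ∀ B ∈ E, A ≠ B → Disjoint A B)
    (hcover : ∀ x : X, ∃ A ∈ E, x ∈ A) : Equivalence (PartitionRel E) where
  refl x := let ⟨A, hA, hx⟩ := hcover x; ⟨A, hA, hx, hx⟩
  symm := fun ⟨A, hA, hx, hy⟩ => ⟨A, hA, hy, hx⟩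
  trans := fun ⟨A, hA, hx, hy⟩ ⟨B, hB, hy', hz⟩ =>
    ⟨B, hB, (partitionRel_iff_mem hdisj hB hy' _).mp ⟨A, hA, hx, hy⟩, hz⟩

theorem quot_mk_partitionRel_eq_iff (hdisj : ∀ A ∈ E, ∀ B ∈ E, A ≠ B → Disjoint A B)
    (hcover : ∀ x : X, ∃ A ∈ E, x ∈ A) {A : Set X} (hA : A ∈ E) {x : X} (hx : x ∈ A) (y : X) :
    Quot.mk (PartitionRel E) y = Quot.mk _ x ↔ y ∈ A := by
  rw [Quot.eq, (partitionRel_equivalence hdisj hcover).eqvGen_iff,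
    partitionRel_iff_mem hdisj hA hx]

theorem preimage_kernImage_quot_mk_partitionRel
    (hdisj : ∀ A ∈ E, ∀ B ∈ E, A ≠ B → Disjoint A B) (hcover : ∀ x : X, ∃ A ∈ E, x ∈ A)
    {A : Set X} (hA : A ∈ E) {x : X} (hx : x ∈ A) (U : Set X) :
    x ∈ Quot.mk (PartitionRel E) ⁻¹' kernImage (Quot.mk _) U ↔ A ⊆ U :=
  forall_congr' fun y => by rw [quot_mk_partitionRel_eq_iff hdisj hcover hA hx]

theorem isClosedMap_quot_mk_partitionRel [TopologicalSpace X]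
    (hdisj : ∀ A ∈ E, ∀ B ∈ E, A ≠ B → Disjoint A B) (hcover : ∀ x : X, ∃ A ∈ E, x ∈ A)
    (husc : ∀ A ∈ E, ∀ U : Set X, IsOpen U → A ⊆ U →
      ∃ V : Set X, IsOpen V ∧ A ⊆ V ∧ ∀ B ∈ E, (B ∩ V).Nonempty → B ⊆ U) :
    IsClosedMap (Quot.mk (PartitionRel E)) := by
  refine isClosedMap_iff_kernImage.mpr fun {U} hU => ?_
  rw [← isQuotientMap_quot_mk.isOpen_preimage, isOpen_iff_forall_mem_open]
  intro x hx
  obtain ⟨A, hA, hxA⟩ := hcover x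
  obtain ⟨V, hVo, hAV, hV⟩ :=
    husc A hA U hU ((preimage_kernImage_quot_mk_partitionRel hdisj hcover hA hxA U).mp hx)
  refine ⟨V, fun y hy => ?_, hVo, hAV hxA⟩
  obtain ⟨B, hB, hyB⟩ := hcover y
  exact (preimage_kernImage_quot_mk_partitionRel hdisj hcover hB hyB U).mpr
    (hV B hB ⟨y, hyB, hy⟩)

theorem isProperMap_quot_mk_partitionRel [TopologicalSpace X]
    (hcomp : ∀ A ∈ E, IsCompact A)
    (hdisj : ∀ A ∈ E, ∀ B ∈ E, A ≠ B → Disjoint A B) (hcover : ∀ x : X, ∃ A ∈ E, x ∈ A)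
    (husc : ∀ A ∈ E, ∀ U : Set X, IsOpen U → A ⊆ U →
      ∃ V : Set X, IsOpen V ∧ A ⊆ V ∧ ∀ B ∈ E, (B ∩ V).Nonempty → B ⊆ U) :
    IsProperMap (Quot.mk (PartitionRel E)) := by
  refine isProperMap_iff_isClosedMap_and_compact_fibers.mpr
    ⟨continuous_quot_mk, isClosedMap_quot_mk_partitionRel hdisj hcover husc, ?_⟩
  rintro ⟨x⟩
  obtain ⟨A, hA, hxA⟩ := hcover x
  convert hcomp A hA
  exact Set.ext (quot_mk_partitionRel_eq_iff hdisj hcover hA hxA)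

end Decomposition

/-- Let `X` be a separable metric space and let `E` be an upper
semi-continuous decomposition of `X` into compact sets. Then the quotient space `X/E`,
with the quotient topology, is a separable metrizable space. -/
theorem usc_decomposition_quotient_metrizable
    {X : Type*} [MetricSpace X] [TopologicalSpace.SeparableSpace X]
    (E : Set (Set X))
    (hcomp : ∀ A ∈ E, IsCompact A)
    (hdisj : ∀ A ∈ E, ∀ B ∈ E, A ≠ B → Disjoint A B)
    (hcover : ∀ x : X, ∃ A ∈ E, x ∈ A)
    (husc : ∀ A ∈ E, ∀ U : Set X, IsOpen U → A ⊆ U →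
      ∃ V : Set X, IsOpen V ∧ A ⊆ V ∧ ∀ B ∈ E, (B ∩ V).Nonempty → B ⊆ U) :
    TopologicalSpace.SeparableSpace (Quot (fun x y : X => ∃ A ∈ E, x ∈ A ∧ y ∈ A)) ∧
    TopologicalSpace.MetrizableSpace (Quot (fun x y : X => ∃ A ∈ E, x ∈ A ∧ y ∈ A)) := by
  show TopologicalSpace.SeparableSpace (Quot (PartitionRel E)) ∧
    TopologicalSpace.MetrizableSpace (Quot (PartitionRel E))
  have hq := isProperMap_quot_mk_partitionRel hcomp hdisj hcover husc
  have := hq.secondCountableTopology_of_surjective Quot.mk_surjective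
  exact ⟨inferInstance, hq.metrizableSpace_of_surjective Quot.mk_surjective⟩

end
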